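/- arXiv:0810.4576 — 3 statements merged into one kernel-verified Lean document; each statement's English description precedes it below -/
import Mathlib

section
/- Let m₁, m₂ be odd coprime integers > 1 and m = m₁m₂. Let γ ∈ F_{2^t} have order m, and let γ₁ = γ^{h₁m₂} have order m₁ and γ₂ = γ^{h₂m₁} have order m₂, with gcd(h₁,m₁)=1 and gcd(h₂,m₂)=1. Suppose P₁(x) is an S_{m₁}-decoding polynomial with respect to γ₁ with k₁ monomials and P₂(x) is an S_{m₂}-decoding polynomial with respect to γ₂ with k₂ monomials. Define P(x) = P₁(x^{h₁m₂}) · P₂(x^{h₂m₁}). Then P is an S_m-decoding polynomial with respect to γ with at most k₁k₂ monomials, where S_{m₁}, S_{m₂}, S_m are the canonical sets of m₁, m₂, m. -/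
/-- `s` (with `0 ≤ s < n`) lies in the canonical set `S_n` of `n`: it is nonzero
and reduces to `0` or `1` modulo each maximal prime power `q^{c}` dividing `n`. -/
def InCanonicalSet (n s : ℕ) : Prop :=
  s < n ∧ s ≠ 0 ∧ ∀ q : ℕ, q.Prime → q ∣ n →
    (s % q ^ (n.factorization q) = 0 ∨ s % q ^ (n.factorization q) = 1)

open Polynomial in
lemma aux_card_comp_X_pow {F : Type*} [Field F] (p : ℕ) (hp : 0 < p) (f : F[X]) :
    (f.comp (X ^ p)).support.card ≤ f.support.card := by
  rw [← expand_eq_comp_X_pow]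
  apply Finset.card_le_card_of_injOn (fun n => n / p)
  · intro n hn
    rw [Finset.mem_coe, mem_support_iff, coeff_expand hp] at hn
    rw [Finset.mem_coe, mem_support_iff]
    split_ifs at hn with h
    · exact hn
    · exact absurd rfl hn
  · intro n hn m hm hnm
    rw [Finset.mem_coe, mem_support_iff, coeff_expand hp] at hn hm
    have hn' : p ∣ n := by by_contra h; simp [h] at hn
    have hm' : p ∣ m := by by_contra h; simp [h] at hm
    obtain ⟨a, rfl⟩ := hn'; obtain ⟨b, rfl⟩ := hm'
    simp only [Nat.mul_div_cancel_left _ hp] at hnm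
    rw [hnm]

lemma aux_canonical_mod (m₁ m₂ s : ℕ) (hm₁ : 1 < m₁) (hm₂ : 1 < m₂)
    (hco : Nat.Coprime m₁ m₂) (hs : InCanonicalSet (m₁ * m₂) s)
    (hne : s % m₁ ≠ 0) : InCanonicalSet m₁ (s % m₁) := by
  obtain ⟨hlt, hs0, hdvd⟩ := hs
  refine ⟨Nat.mod_lt _ (by omega), hne, ?_⟩
  intro q hq hqm
  have hqm' : q ∣ m₁ * m₂ := hqm.mul_right _
  have hfac : (m₁ * m₂).factorization q = m₁.factorization q := by
    rw [Nat.factorization_mul (by omega) (by omega)]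
    have hq2 : ¬ q ∣ m₂ := by
      intro h
      have : q ∣ Nat.gcd m₁ m₂ := Nat.dvd_gcd hqm h
      rw [hco] at this
      exact hq.ne_one (Nat.dvd_one.mp this)
    have : m₂.factorization q = 0 := Nat.factorization_eq_zero_of_not_dvd hq2
    simp [this]
  have h := hdvd q hq hqm'
  rw [hfac] at h
  rwa [Nat.mod_mod_of_dvd _ (Nat.ordProj_dvd m₁ q)]

/-- Composition of decoding polynomials: if `γ` has order `m = m₁ m₂` (`m₁, m₂`
odd, coprime, `> 1`) in a field of characteristic 2, `γ₁ = γ^(h₁ m₂)` and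
`γ₂ = γ^(h₂ m₁)` with `gcd(h₁, m₁) = gcd(h₂, m₂) = 1`, and `P₁`, `P₂` are
`S_{m₁}`- and `S_{m₂}`-decoding polynomials with `k₁` and `k₂` monomials with
respect to `γ₁` and `γ₂`, then `P(x) = P₁(x^{h₁ m₂})·P₂(x^{h₂ m₁})` is an
`S_m`-decoding polynomial with respect to `γ` with at most `k₁ k₂` monomials. -/
theorem stmt_11 {F : Type*} [Field F] [CharP F 2]
    (m₁ m₂ : ℕ) (h₁ : 1 < m₁) (h₂ : 1 < m₂)
    (ho₁ : Odd m₁) (ho₂ : Odd m₂) (hco : Nat.Coprime m₁ m₂)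
    (γ : F) (hγ : orderOf γ = m₁ * m₂)
    (h₁' h₂' : ℕ) (hh₁ : Nat.Coprime h₁' m₁) (hh₂ : Nat.Coprime h₂' m₂)
    (P₁ P₂ : Polynomial F) (k₁ k₂ : ℕ)
    (hk₁ : P₁.support.card = k₁) (hk₂ : P₂.support.card = k₂)
    (hP₁0 : ∀ s : ℕ, InCanonicalSet m₁ s → P₁.eval ((γ ^ (h₁' * m₂)) ^ s) = 0)
    (hP₁1 : P₁.eval 1 = 1)
    (hP₂0 : ∀ s : ℕ, InCanonicalSet m₂ s → P₂.eval ((γ ^ (h₂' * m₁)) ^ s) = 0)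
    (hP₂1 : P₂.eval 1 = 1) :
    (∀ s : ℕ, InCanonicalSet (m₁ * m₂) s →
        (P₁.comp (Polynomial.X ^ (h₁' * m₂)) *
          P₂.comp (Polynomial.X ^ (h₂' * m₁))).eval (γ ^ s) = 0) ∧
      (P₁.comp (Polynomial.X ^ (h₁' * m₂)) *
        P₂.comp (Polynomial.X ^ (h₂' * m₁))).eval 1 = 1 ∧
      (P₁.comp (Polynomial.X ^ (h₁' * m₂)) *
        P₂.comp (Polynomial.X ^ (h₂' * m₁))).support.card ≤ k₁ * k₂ := by
  have hγm : γ ^ (m₁ * m₂) = 1 := by rw [← hγ, pow_orderOf_eq_one]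
  have hγ₁m : (γ ^ (h₁' * m₂)) ^ m₁ = 1 := by
    rw [← pow_mul, show h₁' * m₂ * m₁ = m₁ * m₂ * h₁' by ring, pow_mul, hγm, one_pow]
  have hγ₂m : (γ ^ (h₂' * m₁)) ^ m₂ = 1 := by
    rw [← pow_mul, show h₂' * m₁ * m₂ = m₁ * m₂ * h₂' by ring, pow_mul, hγm, one_pow]
  have hmod₁ : ∀ s : ℕ, (γ ^ (h₁' * m₂)) ^ s = (γ ^ (h₁' * m₂)) ^ (s % m₁) := by
    intro s
    conv_lhs => rw [← Nat.div_add_mod s m₁, pow_add, pow_mul, hγ₁m, one_pow, one_mul]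
  have hmod₂ : ∀ s : ℕ, (γ ^ (h₂' * m₁)) ^ s = (γ ^ (h₂' * m₁)) ^ (s % m₂) := by
    intro s
    conv_lhs => rw [← Nat.div_add_mod s m₂, pow_add, pow_mul, hγ₂m, one_pow, one_mul]
  refine ⟨?_, ?_, ?_⟩
  · intro s hs
    have hnot : ¬ (s % m₁ = 0 ∧ s % m₂ = 0) := by
      rintro ⟨ha, hb⟩
      have h1 : m₁ ∣ s := Nat.dvd_of_mod_eq_zero ha
      have h2 : m₂ ∣ s := Nat.dvd_of_mod_eq_zero hb
      have : m₁ * m₂ ∣ s := Nat.Coprime.mul_dvd_of_dvd_of_dvd hco h1 h2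
      exact absurd hs.1 (not_lt.mpr (Nat.le_of_dvd (Nat.pos_of_ne_zero hs.2.1) this))
    simp only [Polynomial.eval_mul, Polynomial.eval_comp, Polynomial.eval_pow,
      Polynomial.eval_X]
    have e1 : (γ ^ s) ^ (h₁' * m₂) = (γ ^ (h₁' * m₂)) ^ s := by
      rw [← pow_mul, ← pow_mul, mul_comm]
    have e2 : (γ ^ s) ^ (h₂' * m₁) = (γ ^ (h₂' * m₁)) ^ s := by
      rw [← pow_mul, ← pow_mul, mul_comm]
    rw [e1, e2]
    by_cases hc : s % m₁ = 0
    · have hc₂ : s % m₂ ≠ 0 := fun h => hnot ⟨hc, h⟩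
      have := hP₂0 (s % m₂) (aux_canonical_mod m₂ m₁ s h₂ h₁ hco.symm
        (by rwa [mul_comm] at hs) hc₂)
      rw [hmod₂ s, this, mul_zero]
    · have := hP₁0 (s % m₁) (aux_canonical_mod m₁ m₂ s h₁ h₂ hco hs hc)
      rw [hmod₁ s, this, zero_mul]
  · simp [Polynomial.eval_comp, hP₁1, hP₂1]
  · have e₁ : 0 < h₁' * m₂ := by
      have : h₁' ≠ 0 := by
        rintro rfl
        simp [Nat.Coprime] at hh₁
        omega
      positivity
    have e₂ : 0 < h₂' * m₁ := by
      have : h₂' ≠ 0 := by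
        rintro rfl
        simp [Nat.Coprime] at hh₂
        omega
      positivity
    calc (P₁.comp (Polynomial.X ^ (h₁' * m₂)) *
        P₂.comp (Polynomial.X ^ (h₂' * m₁))).support.card
        ≤ (P₁.comp (Polynomial.X ^ (h₁' * m₂))).support.card *
          (P₂.comp (Polynomial.X ^ (h₂' * m₁))).support.card :=
          Polynomial.card_support_mul_le
      _ ≤ k₁ * k₂ := by
          rw [← hk₁, ← hk₂]
          exact Nat.mul_le_mul (aux_card_comp_X_pow _ e₁ P₁) (aux_card_comp_X_pow _ e₂ P₂)
end

section
/- Let m > 1, let U = {u₁, …, u_n} ⊆ Z_m^h be a family of S-matching vectors (⟨u_i, u_i⟩ ≡ 0 mod m for all i, and ⟨u_i, u_j⟩ mod m ∈ S for i ≠ j, where S ⊆ Z_m \ {0}), let γ ∈ F_{2^t} have order m, and let P(x) = a₀ + a₁x^{b₁} + ⋯ + a_{k-1}x^{b_{k-1}} be an S-decoding polynomial. Define C(e_i) ∈ F_{2^t}^{Z_m^h} by C(e_i)(z) = γ^{⟨u_i, z⟩ mod m}. Then for every v ∈ Z_m^h and all i, j ∈ [1,n]: γ^{-⟨u_i,v⟩}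 · ( a₀·C(e_j)(v) + a₁·C(e_j)(v + b₁u_i) + ⋯ + a_{k-1}·C(e_j)(v + b_{k-1}u_i) ) equals 1 if j = i, and equals 0 if j ≠ i. -/
lemma pow_val_add' {m : ℕ} [NeZero m] {M : Type*} [Monoid M] (γ : M)
    (hγ : orderOf γ = m) (x y : ZMod m) :
    γ ^ ((x + y).val) = γ ^ x.val * γ ^ y.val := by
  have hv : (x + y).val = (x.val + y.val) % orderOf γ := by rw [ZMod.val_add, hγ]
  rw [hv, pow_mod_orderOf, pow_add]

lemma pow_val_nsmul' {m : ℕ} [NeZero m] {M : Type*} [Monoid M] (γ : M)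
    (hγ : orderOf γ = m) (c : ZMod m) (bn : ℕ) :
    γ ^ (((bn : ZMod m) * c).val) = (γ ^ c.val) ^ bn := by
  induction bn with
  | zero => simp [ZMod.val_zero]
  | succ n ih =>
      have : ((n + 1 : ℕ) : ZMod m) * c = (n : ZMod m) * c + c := by push_cast; ring
      rw [this, pow_val_add' γ hγ, ih, pow_succ]

/-- Correctness of the matching-vector code decoder: with `U = {u₁, …, u_n}` an
`S`-matching family in `Z_m^h`, `γ ∈ F_{2^t}` of order `m`, and
`P(x) = ∑_j a_j x^{b_j}` an `S`-decoding polynomial, the decoder's linear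
combination of the queried codeword symbols of `C(e_j)` (where
`C(e_i)(z) = γ^{⟨u_i, z⟩}`) equals `1` if `j = i` and `0` otherwise, for every
choice of the random shift `v`. -/
theorem stmt_12 (m : ℕ) (hm : 1 < m) [NeZero m] (t h n k : ℕ)
    (S : Set (ZMod m)) (hS0 : (0 : ZMod m) ∉ S)
    (u : Fin n → Fin h → ZMod m)
    (hself : ∀ i, ∑ ℓ, u i ℓ * u i ℓ = 0)
    (hcross : ∀ i j, i ≠ j → (∑ ℓ, u i ℓ * u j ℓ) ∈ S)
    (γ : GaloisField 2 t) (hγ : orderOf γ = m)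
    (a : Fin k → GaloisField 2 t) (b : Fin k → ℕ)
    (hP0 : ∀ s ∈ S, ∑ jj, a jj * (γ ^ s.val) ^ (b jj) = 0)
    (hP1 : ∑ jj, a jj = 1) :
    ∀ (v : Fin h → ZMod m) (i j : Fin n),
      (γ ^ (∑ ℓ, u i ℓ * v ℓ).val)⁻¹ *
        (∑ jj, a jj * γ ^ (∑ ℓ, u j ℓ * (v ℓ + (b jj : ZMod m) * u i ℓ)).val)
      = if j = i then 1 else 0 := by
  intro v i j
  have hγm : γ ^ m = 1 := hγ ▸ pow_orderOf_eq_one γ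
  have hγ0 : γ ≠ 0 := by
    intro h0
    rw [h0, zero_pow (by omega : m ≠ 0)] at hγm
    exact zero_ne_one hγm
  have hterm : ∀ jj : Fin k,
      γ ^ (∑ ℓ, u j ℓ * (v ℓ + (b jj : ZMod m) * u i ℓ)).val
        = γ ^ (∑ ℓ, u j ℓ * v ℓ).val *
          (γ ^ (∑ ℓ, u j ℓ * u i ℓ).val) ^ (b jj) := by
    intro jj
    have hsum : (∑ ℓ, u j ℓ * (v ℓ + (b jj : ZMod m) * u i ℓ))
        = (∑ ℓ, u j ℓ * v ℓ) + (b jj : ZMod m) * (∑ ℓ, u j ℓ * u i ℓ) := by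
      rw [Finset.mul_sum, ← Finset.sum_add_distrib]
      exact Finset.sum_congr rfl (fun ℓ _ => by ring)
    rw [hsum, pow_val_add' γ hγ, pow_val_nsmul' γ hγ]
  have hrw : (∑ jj, a jj * γ ^ (∑ ℓ, u j ℓ * (v ℓ + (b jj : ZMod m) * u i ℓ)).val)
      = γ ^ (∑ ℓ, u j ℓ * v ℓ).val *
        ∑ jj, a jj * (γ ^ (∑ ℓ, u j ℓ * u i ℓ).val) ^ (b jj) := by
    rw [Finset.mul_sum]
    exact Finset.sum_congr rfl (fun jj _ => by rw [hterm jj]; ring)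
  rw [hrw]
  by_cases hji : j = i
  · subst hji
    rw [hself j]
    simp only [ZMod.val_zero, pow_zero, one_pow, mul_one, hP1, mul_one]
    rw [if_pos trivial]
    exact inv_mul_cancel₀ (pow_ne_zero _ hγ0)
  · rw [hP0 _ (hcross j i hji), mul_zero, mul_zero, if_neg hji]
end

section
/- Let m = 15 = 3·5 with canonical set S_{15} = {1, 10, 6}, and let γ be an element of order 15 in F_{2^4} = F_2[γ]/(γ^4 + γ + 1). Then there is no polynomial P(x) ∈ F_{2^4}[x] with at most 3 monomials of degrees less than 15 satisfying P(1) = 1 and P(γ^s) = 0 for all s ∈ S_{15}. -/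
namespace St16

/-- Addition table of `F₁₆` in Zech-log encoding: `0..14` represent `γ^k`, `15`
represents `0`.  Entry `(a,b)` is the base-16 digit at position `16*a+b`. -/
def caddT (a b : Nat) : Nat := 178970338759626117045958704804109300442202624754105232167725239550116799360892751087796888167222154836038016993199653310322813248459205929879394369968663743142790295813673175232149424039037096828974317711227880473849717706929838994798869181700470571438724826603584668518780486898343578896227727627147739785295 / 16 ^ (a*16+b) % 16

/-- Zech logarithm: `1 + γ^d = γ^(zech d)` for `0 < d < 15`. -/
def zech : Nat → Nat
  | 1 => 4 | 2 => 8 | 3 => 14 | 4 => 1 | 5 => 10 | 6 => 13 | 7 => 9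
  | 8 => 2 | 9 => 7 | 10 => 5 | 11 => 12 | 12 => 11 | 13 => 6 | 14 => 3
  | _ => 0

def cadd (a b : Nat) : Nat :=
  if a = 15 then b else if b = 15 then a else
  if a = b then 15 else
  if a < b then (a + zech (b - a)) % 15 else (b + zech (a - b)) % 15

def c3v (i1 i2 i3 c2 : Nat) : Nat := (caddT (i1 % 15) ((c2+i2) % 15) + 15 - i3) % 15

def bad1 (i1 i2 i3 c2 : Nat) : Nat :=
  (1 - (caddT (i1 % 15) ((c2+i2) % 15) + 1)/16) *
  ((caddT (10*i1 % 15) (caddT ((c2+10*i2) % 15) ((c3v i1 i2 i3 c2 + 10*i3) % 15)) + 1)/16) *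
  ((caddT (6*i1 % 15) (caddT ((c2+6*i2) % 15) ((c3v i1 i2 i3 c2 + 6*i3) % 15)) + 1)/16) *
  (1 - (caddT 0 (caddT (c2 % 15) (c3v i1 i2 i3 c2 % 15)) + 1)/16)

def sc2 (i1 i2 i3 : Nat) : Nat → Nat
  | 0 => 0
  | n+1 => bad1 i1 i2 i3 n + sc2 i1 i2 i3 n
def si3 (i1 i2 : Nat) : Nat → Nat
  | 0 => 0
  | n+1 => sc2 i1 i2 n 15 + si3 i1 i2 n
def si2 (i1 : Nat) : Nat → Nat
  | 0 => 0
  | n+1 => si3 i1 n 15 + si2 i1 n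
def si1 : Nat → Nat
  | 0 => 0
  | n+1 => si2 n 15 + si1 n

theorem si1_eq : si1 15 = 0 := by decide +kernel

theorem caddT_eq_cadd : ∀ a < 16, ∀ b < 16, caddT a b = cadd a b := by decide +kernel

theorem sc2_zero {i1 i2 i3 : ℕ} : ∀ n, sc2 i1 i2 i3 n = 0 → ∀ c < n, bad1 i1 i2 i3 c = 0 := by
  intro n
  induction n with
  | zero => intro _ c hc; omega
  | succ k ih =>
    intro h c hc
    rw [sc2] at h
    have h1 : bad1 i1 i2 i3 k = 0 := by omega
    have h2 : sc2 i1 i2 i3 k = 0 := by omega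
    rcases Nat.lt_succ_iff_lt_or_eq.mp hc with h' | h'
    · exact ih h2 c h'
    · subst h'; exact h1

theorem si3_zero {i1 i2 : ℕ} : ∀ n, si3 i1 i2 n = 0 → ∀ c < n, sc2 i1 i2 c 15 = 0 := by
  intro n
  induction n with
  | zero => intro _ c hc; omega
  | succ k ih =>
    intro h c hc
    rw [si3] at h
    rcases Nat.lt_succ_iff_lt_or_eq.mp hc with h' | h'
    · exact ih (by omega) c h'
    · subst h'; omega

theorem si2_zero {i1 : ℕ} : ∀ n, si2 i1 n = 0 → ∀ c < n, si3 i1 c 15 = 0 := by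
  intro n
  induction n with
  | zero => intro _ c hc; omega
  | succ k ih =>
    intro h c hc
    rw [si2] at h
    rcases Nat.lt_succ_iff_lt_or_eq.mp hc with h' | h'
    · exact ih (by omega) c h'
    · subst h'; omega

theorem si1_zero : ∀ n, si1 n = 0 → ∀ c < n, si2 c 15 = 0 := by
  intro n
  induction n with
  | zero => intro _ c hc; omega
  | succ k ih =>
    intro h c hc
    rw [si1] at h
    rcases Nat.lt_succ_iff_lt_or_eq.mp hc with h' | h'
    · exact ih (by omega) c h'
    · subst h'; omega

theorem bad1_eq_zero : ∀ i1 < 15, ∀ i2 < 15, ∀ i3 < 15, ∀ c2 < 15,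
    bad1 i1 i2 i3 c2 = 0 := by
  intro i1 h1 i2 h2 i3 h3 c2 h4
  exact sc2_zero 15 (si3_zero 15 (si2_zero 15 (si1_zero 15 si1_eq i1 h1) i2 h2) i3 h3) c2 h4

theorem cadd_le {a b : Nat} (ha : a ≤ 15) (hb : b ≤ 15) : cadd a b ≤ 15 := by
  unfold cadd; split_ifs <;> omega

theorem caddT_le {a b : Nat} (ha : a ≤ 15) (hb : b ≤ 15) : caddT a b ≤ 15 := by
  rw [caddT_eq_cadd a (by omega) b (by omega)]; exact cadd_le ha hb

section Field

variable {F : Type*} [Field F] {γ : F}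

theorem pow_zech (h2 : (2:F) = 0) (hγ : γ ^ 4 + γ + 1 = 0) :
    ∀ d, 0 < d → d < 15 → γ ^ (zech d) = 1 + γ ^ d := by
  intro d hd1 hd2
  interval_cases d
  · show γ^4 = 1 + γ^1
    linear_combination hγ + (-1-γ) * h2
  · show γ^8 = 1 + γ^2
    linear_combination (-1 - γ + γ^4) * hγ + γ * h2
  · show γ^14 = 1 + γ^3
    linear_combination (-3 - γ + γ^2 + 2*γ^3 + γ^4 - γ^6 - γ^7 + γ^10) * hγ + (1 + 2*γ - 2*γ^3) * h2
  · show γ^1 = 1 + γ^4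
    linear_combination (-1) * hγ + γ * h2
  · show γ^10 = 1 + γ^5
    linear_combination (1 - γ - γ^2 - γ^3 + γ^6) * hγ + (-1 + γ^2 + γ^3) * h2
  · show γ^13 = 1 + γ^6
    linear_combination (-1 + γ + γ^2 + γ^3 - γ^5 - γ^6 + γ^9) * hγ + (-(γ^2) - γ^3) * h2
  · show γ^9 = 1 + γ^7
    linear_combination (1 - γ - γ^2 - γ^3 + γ^5) * hγ + (-1 + γ^2 + γ^3) * h2
  · show γ^2 = 1 + γ^8
    linear_combination (1 + γ - γ^4) * hγ + (-1 - γ) * h2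
  · show γ^7 = 1 + γ^9
    linear_combination (-1 + γ + γ^2 + γ^3 - γ^5) * hγ + (-(γ^2) - γ^3) * h2
  · show γ^5 = 1 + γ^10
    linear_combination (-1 + γ + γ^2 + γ^3 - γ^6) * hγ + (-(γ^2) - γ^3) * h2
  · show γ^12 = 1 + γ^11
    linear_combination (-1 + γ + γ^2 + γ^3 - γ^5 - γ^7 + γ^8) * hγ + (-(γ^2) - γ^3) * h2
  · show γ^11 = 1 + γ^12
    linear_combination (1 - γ - γ^2 - γ^3 + γ^5 + γ^7 - γ^8) * hγ + (-1 + γ^2 + γ^3) * h2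
  · show γ^6 = 1 + γ^13
    linear_combination (1 - γ - γ^2 - γ^3 + γ^5 + γ^6 - γ^9) * hγ + (-1 + γ^2 + γ^3) * h2
  · show γ^3 = 1 + γ^14
    linear_combination (3 + γ - γ^2 - 2*γ^3 - γ^4 + γ^6 + γ^7 - γ^10) * hγ + (-2 - 2*γ + 2*γ^3) * h2

/-- value of a Zech code in `F`. -/
def ev (γ : F) (n : ℕ) : F := if n = 15 then 0 else γ ^ n

theorem ev_caddT (h2 : (2:F) = 0) (hγ : γ ^ 4 + γ + 1 = 0) (h15 : γ ^ 15 = 1) :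
    ∀ a b : ℕ, a ≤ 15 → b ≤ 15 → ev γ (caddT a b) = ev γ a + ev γ b := by
  have hpm : ∀ n : ℕ, γ ^ (n % 15) = γ ^ n := by
    intro n
    conv_rhs => rw [← Nat.div_add_mod n 15]
    rw [pow_add, pow_mul, h15, one_pow, one_mul]
  have hz := pow_zech h2 hγ
  intro a b ha hb
  rw [caddT_eq_cadd a (by omega) b (by omega)]
  by_cases ha' : a = 15
  · subst ha'; simp [cadd, ev]
  · by_cases hb' : b = 15
    · subst hb'; simp [cadd, ev, ha']
    · by_cases hab : a = b
      · subst hab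
        have hc : cadd a a = 15 := by simp [cadd, ha']
        rw [hc, show ev γ 15 = 0 from by simp [ev],
          show ev γ a = γ ^ a from by simp [ev, ha']]
        linear_combination (-(γ^a)) * h2
      · rcases lt_or_gt_of_ne hab with h | h
        · have hc : cadd a b = (a + zech (b - a)) % 15 := by
            simp [cadd, ha', hb', hab, h]
          rw [hc]
          have hlt : (a + zech (b - a)) % 15 < 15 := Nat.mod_lt _ (by norm_num)
          simp only [ev, if_neg (by omega : ¬ (a + zech (b-a)) % 15 = 15),
            if_neg ha', if_neg hb']
          rw [hpm, pow_add, hz (b-a) (by omega) (by omega), mul_add, mul_one, ← pow_add,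
            show a + (b - a) = b by omega]
        · have hc : cadd a b = (b + zech (a - b)) % 15 := by
            simp [cadd, ha', hb', hab, not_lt_of_gt h]
          rw [hc]
          have hlt : (b + zech (a - b)) % 15 < 15 := Nat.mod_lt _ (by norm_num)
          simp only [ev, if_neg (by omega : ¬ (b + zech (a-b)) % 15 = 15),
            if_neg ha', if_neg hb']
          rw [hpm, pow_add, hz (a-b) (by omega) (by omega), mul_add, mul_one, ← pow_add,
            show b + (a - b) = a by omega, add_comm]

end Field

end St16

/-- In `F_{2^4} = F_2[γ]/(γ^4 + γ + 1)` the element `γ` has order `15`, and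
there is no polynomial `P ∈ F_{2^4}[x]` with at most 3 monomials, all of degree
less than 15, satisfying `P(1) = 1` and `P(γ^s) = 0` for all
`s ∈ S_15 = {1, 10, 6}`. -/
theorem stmt_16 {F : Type*} [Field F] [Fintype F]
    (hcard : Fintype.card F = 16) (γ : F) (hγ : γ ^ 4 + γ + 1 = 0) :
    orderOf γ = 15 ∧
    ¬ ∃ P : Polynomial F, P.support.card ≤ 3 ∧ (∀ b ∈ P.support, b < 15) ∧
        P.eval 1 = 1 ∧ ∀ s ∈ ({1, 10, 6} : Finset ℕ), P.eval (γ ^ s) = 0 := by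
  classical
  -- characteristic 2
  have h16 : (16 : F) = 0 := by
    have h := FiniteField.cast_card_eq_zero F
    rw [hcard] at h
    exact_mod_cast h
  have h2 : (2 : F) = 0 := by
    have h24 : (2 : F) ^ 4 = 0 := by norm_num; linear_combination h16
    exact (pow_eq_zero_iff (by norm_num)).mp h24
  have hγ0 : γ ≠ 0 := by
    intro h; rw [h] at hγ; norm_num at hγ
  have h15 : γ ^ 15 = 1 := by
    linear_combination (-3 - 3*γ - γ^2 + γ^3 + 2*γ^4 + γ^5 - γ^7 - γ^8 + γ^11) * hγ +
      (1 + 3*γ + 2*γ^2) * h2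
  have hne1 : γ ≠ 1 := by
    intro h; rw [h] at hγ
    exact one_ne_zero (by linear_combination hγ - h2)
  have hne3 : γ ^ 3 ≠ 1 := by
    intro h3
    exact one_ne_zero (by linear_combination hγ - γ * h3 - γ * h2)
  have hne5 : γ ^ 5 ≠ 1 := by
    intro h5
    exact one_ne_zero
      (by linear_combination (γ^3+γ^2+1) * hγ - (γ^2+γ) * h5 - (γ^4+γ^3+γ^2+γ) * h2)
  have hord : orderOf γ = 15 := by
    have hdvd := orderOf_dvd_of_pow_eq_one h15
    have hfin : IsOfFinOrder γ := isOfFinOrder_iff_pow_eq_one.mpr ⟨15, by norm_num, h15⟩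
    have hpos : 0 < orderOf γ := hfin.orderOf_pos
    have hpow : γ ^ orderOf γ = 1 := pow_orderOf_eq_one γ
    generalize hd : orderOf γ = d at hdvd hpos hpow ⊢
    have hdle : d ≤ 15 := Nat.le_of_dvd (by norm_num) hdvd
    interval_cases d
    · rw [pow_one] at hpow; exact absurd hpow hne1
    · norm_num at hdvd
    · exact absurd hpow hne3
    · norm_num at hdvd
    · exact absurd hpow hne5
    · norm_num at hdvd
    · norm_num at hdvd
    · norm_num at hdvd
    · norm_num at hdvd
    · norm_num at hdvd
    · norm_num at hdvd
    · norm_num at hdvd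
    · norm_num at hdvd
    · norm_num at hdvd
    · rfl
  refine ⟨hord, ?_⟩
  -- auxiliary power facts
  have hpm : ∀ n : ℕ, γ ^ (n % 15) = γ ^ n := by
    intro n
    conv_rhs => rw [← Nat.div_add_mod n 15]
    rw [pow_add, pow_mul, h15, one_pow, one_mul]
  have hcong : ∀ a b : ℕ, a % 15 = b % 15 → γ ^ a = γ ^ b := by
    intro a b h; rw [← hpm a, ← hpm b, h]
  have hinj : ∀ a b : ℕ, a < 15 → b < 15 → γ ^ a = γ ^ b → a = b := by
    have key : ∀ a b : ℕ, a ≤ b → b < 15 → γ ^ a = γ ^ b → a = b := by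
      intro a b hab hb he
      have h1 : γ ^ a * γ ^ (b - a) = γ ^ a * 1 := by
        rw [mul_one, ← pow_add, Nat.add_sub_cancel' hab, he]
      have h2' : γ ^ (b - a) = 1 := mul_left_cancel₀ (pow_ne_zero a hγ0) h1
      have hdvd := orderOf_dvd_of_pow_eq_one h2'
      rw [hord] at hdvd
      omega
    intro a b ha hb he
    rcases le_total a b with h | h
    · exact key a b h hb he
    · exact (key b a h ha he.symm).symm
  have hsurj : ∀ b : F, b ≠ 0 → ∃ c, c < 15 ∧ γ ^ c = b := by
    intro b hb
    have hTcard : ((Finset.range 15).image (γ ^ ·)).card = 15 := by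
      rw [Finset.card_image_of_injOn, Finset.card_range]
      intro x hx y hy h
      exact hinj _ _ (Finset.mem_range.mp hx) (Finset.mem_range.mp hy) h
    have hU : ((Finset.range 15).image (γ ^ ·)) ⊆ Finset.univ.erase 0 := by
      intro x hx
      rcases Finset.mem_image.mp hx with ⟨k, _, rfl⟩
      exact Finset.mem_erase.mpr ⟨pow_ne_zero _ hγ0, Finset.mem_univ _⟩
    have hUcard : (Finset.univ.erase (0:F)).card = 15 := by
      rw [Finset.card_erase_of_mem (Finset.mem_univ _), Finset.card_univ, hcard]
    have hTU : ((Finset.range 15).image (γ ^ ·)) = Finset.univ.erase 0 :=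
      Finset.eq_of_subset_of_card_le hU (by omega)
    have hbT : b ∈ (Finset.range 15).image (γ ^ ·) := by
      rw [hTU]; exact Finset.mem_erase.mpr ⟨hb, Finset.mem_univ _⟩
    rcases Finset.mem_image.mp hbT with ⟨k, hk, he⟩
    exact ⟨k, Finset.mem_range.mp hk, he⟩
  -- value lemmas for the Zech encoding
  have hev := St16.ev_caddT h2 hγ h15
  have hev0 : ∀ m : ℕ, m ≤ 15 → St16.ev γ m = 0 → m = 15 := by
    intro m hm h
    by_contra h'
    rw [St16.ev, if_neg h'] at h
    exact pow_ne_zero m hγ0 h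
  have hevlt : ∀ m : ℕ, m < 15 → St16.ev γ m = γ ^ m := by
    intro m hm; rw [St16.ev, if_neg (by omega)]
  have hsum3 : ∀ x y z : ℕ, x < 15 → y < 15 → z < 15 →
      St16.ev γ (St16.caddT x (St16.caddT y z)) = γ ^ x + γ ^ y + γ ^ z := by
    intro x y z hx hy hz
    rw [hev x _ (by omega) (St16.caddT_le (by omega) (by omega)),
      hev y z (by omega) (by omega), hevlt x hx, hevlt y hy, hevlt z hz, add_assoc]
  -- the core impossibility for a 3-term combination
  have core : ∀ n1 n2 n3 c2 c3 : ℕ, n1 < 15 → n2 < 15 → n3 < 15 → c2 < 15 → c3 < 15 →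
      (γ ^ n1 + γ ^ (c2 + n2) + γ ^ (c3 + n3) = 0) →
      (γ ^ (10*n1) + γ ^ (c2 + 10*n2) + γ ^ (c3 + 10*n3) = 0) →
      (γ ^ (6*n1) + γ ^ (c2 + 6*n2) + γ ^ (c3 + 6*n3) = 0) →
      (1 + γ ^ c2 + γ ^ c3 ≠ 0) → False := by
    intro n1 n2 n3 c2 c3 hn1 hn2 hn3 hc2 hc3 E1 E10 E6 E0
    have hmlt : ∀ x : ℕ, x % 15 < 15 := fun x => Nat.mod_lt _ (by norm_num)
    -- the value t from the s = 1 equation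
    have ht0 : St16.ev γ (St16.caddT (n1 % 15) ((c2 + n2) % 15)) = γ ^ (c3 + n3) := by
      rw [hev _ _ (by omega) (by omega), hevlt _ (hmlt n1), hevlt _ (hmlt (c2+n2)),
        hpm, hpm]
      linear_combination E1 - γ ^ (c3 + n3) * h2
    have htle : St16.caddT (n1 % 15) ((c2 + n2) % 15) ≤ 15 :=
      St16.caddT_le (by omega) (by omega)
    have htne : St16.caddT (n1 % 15) ((c2 + n2) % 15) ≠ 15 := by
      intro h
      rw [h, St16.ev, if_pos rfl] at ht0
      exact pow_ne_zero _ hγ0 ht0.symm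
    have htlt : St16.caddT (n1 % 15) ((c2 + n2) % 15) < 15 := by omega
    have ht : St16.caddT (n1 % 15) ((c2 + n2) % 15) = (c3 + n3) % 15 := by
      apply hinj _ _ htlt (hmlt _)
      rw [← hevlt _ htlt, ht0, hpm]
    have hc3v : St16.c3v n1 n2 n3 c2 = c3 := by
      unfold St16.c3v
      rw [ht]
      omega
    -- s = 10 and s = 6 chains are zero, s = 0 chain is nonzero
    have hv10 : St16.caddT (10*n1 % 15) (St16.caddT ((c2 + 10*n2) % 15) ((c3 + 10*n3) % 15)) = 15 := by
      apply hev0 _ (St16.caddT_le (by omega) (St16.caddT_le (by omega) (by omega)))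
      rw [hsum3 _ _ _ (hmlt _) (hmlt _) (hmlt _), hpm, hpm, hpm]
      exact E10
    have hv6 : St16.caddT (6*n1 % 15) (St16.caddT ((c2 + 6*n2) % 15) ((c3 + 6*n3) % 15)) = 15 := by
      apply hev0 _ (St16.caddT_le (by omega) (St16.caddT_le (by omega) (by omega)))
      rw [hsum3 _ _ _ (hmlt _) (hmlt _) (hmlt _), hpm, hpm, hpm]
      exact E6
    have hv0le : St16.caddT 0 (St16.caddT (c2 % 15) (c3 % 15)) ≤ 15 :=
      St16.caddT_le (by omega) (St16.caddT_le (by omega) (by omega))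
    have hv0 : St16.caddT 0 (St16.caddT (c2 % 15) (c3 % 15)) ≠ 15 := by
      intro h
      apply E0
      have := hsum3 0 (c2 % 15) (c3 % 15) (by omega) (hmlt _) (hmlt _)
      rw [h, St16.ev, if_pos rfl, pow_zero, hpm, hpm] at this
      exact this.symm
    -- now evaluate bad1
    have hb := St16.bad1_eq_zero n1 hn1 n2 hn2 n3 hn3 c2 hc2
    unfold St16.bad1 at hb
    rw [hc3v, ht, hv10, hv6] at hb
    have e1 : 1 - ((c3 + n3) % 15 + 1)/16 = 1 := by have := hmlt (c3 + n3); omega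
    have e4 : 1 - (St16.caddT 0 (St16.caddT (c2 % 15) (c3 % 15)) + 1)/16 = 1 := by omega
    rw [e1, e4] at hb
    norm_num at hb
  -- unpack a hypothetical polynomial
  rintro ⟨P, hcard3, hdeg, hP1, hPs⟩
  have hPsum : ∀ x : F, P.eval x = ∑ i ∈ P.support, P.coeff i * x ^ i := by
    intro x; rw [Polynomial.eval_eq_sum, Polynomial.sum_def]
  have hmem1 : (1 : ℕ) ∈ ({1, 10, 6} : Finset ℕ) := by decide
  have hmem10 : (10 : ℕ) ∈ ({1, 10, 6} : Finset ℕ) := by decide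
  have hmem6 : (6 : ℕ) ∈ ({1, 10, 6} : Finset ℕ) := by decide
  have hcases : P.support.card = 0 ∨ P.support.card = 1 ∨ P.support.card = 2 ∨
      P.support.card = 3 := by omega
  rcases hcases with h | h | h | h
  · -- empty support
    rw [Finset.card_eq_zero] at h
    have h0 := hPsum 1
    rw [h, Finset.sum_empty] at h0
    rw [h0] at hP1
    exact zero_ne_one hP1
  · -- one term
    rcases Finset.card_eq_one.mp h with ⟨n1, hS⟩
    have ha1 : P.coeff n1 ≠ 0 := Polynomial.mem_support_iff.mp (by rw [hS]; simp)
    have E := hPs 1 hmem1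
    rw [hPsum, hS, Finset.sum_singleton] at E
    rcases mul_eq_zero.mp E with h' | h'
    · exact ha1 h'
    · exact pow_ne_zero _ (pow_ne_zero _ hγ0) h'
  · -- two terms
    rcases Finset.card_eq_two.mp h with ⟨n1, n2, hne, hS⟩
    have hn1S : n1 ∈ P.support := by rw [hS]; simp
    have hn2S : n2 ∈ P.support := by rw [hS]; simp
    have hn1 : n1 < 15 := hdeg n1 hn1S
    have hn2 : n2 < 15 := hdeg n2 hn2S
    have ha1 : P.coeff n1 ≠ 0 := Polynomial.mem_support_iff.mp hn1S
    have ha2 : P.coeff n2 ≠ 0 := Polynomial.mem_support_iff.mp hn2S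
    obtain ⟨c1, hc1, he1⟩ := hsurj _ ha1
    obtain ⟨c2, hc2, he2⟩ := hsurj _ ha2
    have key : ∀ s : ℕ, s ∈ ({1, 10, 6} : Finset ℕ) →
        (c1 + s*n1) % 15 = (c2 + s*n2) % 15 := by
      intro s hs
      have E := hPs s hs
      rw [hPsum, hS, Finset.sum_pair hne, ← he1, ← he2] at E
      simp only [← pow_mul, ← pow_add] at E
      have hx : γ ^ (c1 + s*n1) = γ ^ (c2 + s*n2) := by
        linear_combination E - γ ^ (c2 + s*n2) * h2
      exact hinj ((c1 + s*n1) % 15) ((c2 + s*n2) % 15) (Nat.mod_lt _ (by norm_num))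
        (Nat.mod_lt _ (by norm_num)) (by rw [hpm, hpm]; exact hx)
    have k1 := key 1 hmem1
    have k10 := key 10 hmem10
    have k6 := key 6 hmem6
    omega
  · -- three terms
    rcases Finset.card_eq_three.mp h with ⟨n1, n2, n3, hne12, hne13, hne23, hS⟩
    have hn1S : n1 ∈ P.support := by rw [hS]; simp
    have hn2S : n2 ∈ P.support := by rw [hS]; simp
    have hn3S : n3 ∈ P.support := by rw [hS]; simp
    have hn1 : n1 < 15 := hdeg n1 hn1S
    have hn2 : n2 < 15 := hdeg n2 hn2S
    have hn3 : n3 < 15 := hdeg n3 hn3S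
    have ha1 : P.coeff n1 ≠ 0 := Polynomial.mem_support_iff.mp hn1S
    have ha2 : P.coeff n2 ≠ 0 := Polynomial.mem_support_iff.mp hn2S
    have ha3 : P.coeff n3 ≠ 0 := Polynomial.mem_support_iff.mp hn3S
    obtain ⟨c1, hc1, he1⟩ := hsurj _ ha1
    obtain ⟨c2, hc2, he2⟩ := hsurj _ ha2
    obtain ⟨c3, hc3, he3⟩ := hsurj _ ha3
    have hsum : ∀ f : ℕ → F, (∑ i ∈ ({n1, n2, n3} : Finset ℕ), f i) = f n1 + f n2 + f n3 := by
      intro f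
      rw [show ({n1, n2, n3} : Finset ℕ) = insert n1 {n2, n3} from rfl,
        Finset.sum_insert (by simp [hne12, hne13]), Finset.sum_pair hne23, add_assoc]
    have Es : ∀ s : ℕ, s ∈ ({1, 10, 6} : Finset ℕ) →
        γ ^ (c1 + s*n1) + γ ^ (c2 + s*n2) + γ ^ (c3 + s*n3) = 0 := by
      intro s hs
      have E := hPs s hs
      rw [hPsum, hS, hsum, ← he1, ← he2, ← he3] at E
      simp only [← pow_mul, ← pow_add] at E
      exact E
    have E0 : γ ^ c1 + γ ^ c2 + γ ^ c3 = 1 := by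
      have E := hP1
      rw [hPsum, hS, hsum, ← he1, ← he2, ← he3] at E
      simpa using E
    -- normalize: divide by γ^c1 (i.e. multiply by γ^(15-c1))
    have hshift : ∀ c s n : ℕ, γ ^ (c + s*n) * γ ^ (15 - c1) =
        γ ^ ((c + 15 - c1) % 15 + s*n) := by
      intro c s n
      rw [← pow_add]
      apply hcong
      omega
    have Es' : ∀ s : ℕ, s ∈ ({1, 10, 6} : Finset ℕ) →
        γ ^ (s*n1) + γ ^ ((c2 + 15 - c1) % 15 + s*n2) + γ ^ ((c3 + 15 - c1) % 15 + s*n3) = 0 := by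
      intro s hs
      have E := congrArg (fun z => z * γ ^ (15 - c1)) (Es s hs)
      simp only [add_mul, zero_mul] at E
      rw [hshift c1, hshift c2, hshift c3] at E
      rw [← E]
      congr 2
      apply hcong
      omega
    have E0' : 1 + γ ^ ((c2 + 15 - c1) % 15) + γ ^ ((c3 + 15 - c1) % 15) ≠ 0 := by
      have E := congrArg (fun z => z * γ ^ (15 - c1)) E0
      simp only [add_mul, one_mul] at E
      have r1 : γ ^ c1 * γ ^ (15 - c1) = 1 := by
        rw [← pow_add, show c1 + (15 - c1) = 15 by omega, h15]
      have r2 : γ ^ c2 * γ ^ (15 - c1) = γ ^ ((c2 + 15 - c1) % 15) := by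
        rw [← pow_add]; apply hcong; omega
      have r3 : γ ^ c3 * γ ^ (15 - c1) = γ ^ ((c3 + 15 - c1) % 15) := by
        rw [← pow_add]; apply hcong; omega
      rw [r1, r2, r3] at E
      rw [E]
      exact pow_ne_zero _ hγ0
    have E1' := Es' 1 hmem1
    have E10' := Es' 10 hmem10
    have E6' := Es' 6 hmem6
    rw [one_mul, one_mul, one_mul] at E1'
    exact core n1 n2 n3 ((c2 + 15 - c1) % 15) ((c3 + 15 - c1) % 15) hn1 hn2 hn3
      (Nat.mod_lt _ (by norm_num)) (Nat.mod_lt _ (by norm_num)) E1' E10' E6' E0'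
end
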